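/- arXiv:2309.04742 — 2 statements merged into one kernel-verified Lean document; each statement's English description precedes it below -/
import Mathlib

section
/- Let μ and ν be probability measures on ℝ^D with finite second moments, means m_μ, m_ν and covariance matrices P_μ, P_ν. Then for any coupling γ of μ and ν with (X, Y) ∼ γ, the operator norm of P_μ - P_ν is bounded by (tr(P_μ)^{1/2} + tr(P_ν)^{1/2}) · E[|X - m_μ - (Y - m_ν)|²]^{1/2}. -/
/-!
On the coupling put `A = X - m_μ` and `B = Y - m_ν`. Then `P_μ - P_ν` has the bilinear form
`(u, v) ↦ 𝔼[⟪v, A⟫⟪u, A⟫ - ⟪v, B⟫⟪u, B⟫]`, whose integrand is `⟪v, A⟫⟪u, A - B⟫ + ⟪v, A - B⟫⟪u, B⟫`.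
Cauchy–Schwarz in `ℝ^D` and then in `L²(γ)` bounds it, for unit `u` and `v`, by
`(𝔼‖A‖²)^{1/2} + (𝔼‖B‖²)^{1/2}` times `(𝔼‖A - B‖²)^{1/2}`, and `𝔼‖A‖² = tr P_μ`, `𝔼‖B‖² = tr P_ν`.
-/

open MeasureTheory Matrix

/-- The `ℓ²` operator norm of a real `D × D` matrix. -/
noncomputable def matrixOpNorm {D : ℕ} (M : Matrix (Fin D) (Fin D) ℝ) : ℝ :=
  ‖LinearMap.toContinuousLinearMap (Matrix.toEuclideanLin M)‖

open scoped RealInnerProductSpace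

theorem integral_norm_mul_norm_le_sqrt_mul_sqrt {α E F : Type*} [MeasurableSpace α] {m : Measure α}
    [NormedAddCommGroup E] [NormedAddCommGroup F] {f : α → E} {g : α → F}
    (hf : MemLp f 2 m) (hg : MemLp g 2 m) :
    ∫ x, ‖f x‖ * ‖g x‖ ∂m ≤ √(∫ x, ‖f x‖ ^ 2 ∂m) * √(∫ x, ‖g x‖ ^ 2 ∂m) := by
  have h := integral_mul_le_Lp_mul_Lq_of_nonneg (μ := m) Real.HolderConjugate.two_two
    (ae_of_all _ fun x => norm_nonneg (f x)) (ae_of_all _ fun x => norm_nonneg (g x))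
    (by simpa using hf.norm) (by simpa using hg.norm)
  simpa only [Real.sqrt_eq_rpow, Real.rpow_two, one_div] using h

theorem abs_inner_mul_inner_sub_inner_mul_inner_le {E : Type*} [NormedAddCommGroup E]
    [InnerProductSpace ℝ E] (u v a b : E) :
    |⟪u, a⟫ * ⟪v, a⟫ - ⟪u, b⟫ * ⟪v, b⟫| ≤ ‖u‖ * ‖v‖ * ((‖a‖ + ‖b‖) * ‖a - b‖) := by
  have key : ⟪u, a⟫ * ⟪v, a⟫ - ⟪u, b⟫ * ⟪v, b⟫ = ⟪u, a⟫ * ⟪v, a - b⟫ + ⟪u, a - b⟫ * ⟪v, b⟫ := by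
    rw [inner_sub_right, inner_sub_right]; ring
  rw [key]
  calc _ ≤ |⟪u, a⟫| * |⟪v, a - b⟫| + |⟪u, a - b⟫| * |⟪v, b⟫| := by
        simpa only [abs_mul] using abs_add_le (⟪u, a⟫ * ⟪v, a - b⟫) (⟪u, a - b⟫ * ⟪v, b⟫)
    _ ≤ ‖u‖ * ‖a‖ * (‖v‖ * ‖a - b‖) + ‖u‖ * ‖a - b‖ * (‖v‖ * ‖b‖) := by
        gcongr <;> exact abs_real_inner_le_norm _ _
    _ = _ := by ring

section SecondMoment

variable {α ι : Type*} [MeasurableSpace α] {m : Measure α}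

noncomputable def secondMomentMatrix (W : α → EuclideanSpace ℝ ι) (m : Measure α) : Matrix ι ι ℝ :=
  Matrix.of fun i j => ∫ x, W x i * W x j ∂m

@[simp]
theorem secondMomentMatrix_apply (W : α → EuclideanSpace ℝ ι) (m : Measure α) (i j : ι) :
    secondMomentMatrix W m i j = ∫ x, W x i * W x j ∂m :=
  rfl

theorem secondMomentMatrix_map {β : Type*} [MeasurableSpace β] {f : α → β}
    (hf : AEMeasurable f m) {W : β → EuclideanSpace ℝ ι}
    (hW : AEStronglyMeasurable W (m.map f)) :
    secondMomentMatrix W (m.map f) = secondMomentMatrix (W ∘ f) m := by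
  ext i j
  have hcoord (k : ι) : AEStronglyMeasurable (fun y => W y k) (m.map f) :=
    (EuclideanSpace.proj k).continuous.comp_aestronglyMeasurable hW
  exact integral_map hf ((hcoord i).mul (hcoord j))

variable [Fintype ι]

theorem MeasureTheory.MemLp.integrable_coord_mul_coord {W : α → EuclideanSpace ℝ ι}
    (hW : MemLp W 2 m) (i j : ι) : Integrable (fun x => W x i * W x j) m :=
  have hcoord (k : ι) : MemLp (fun x => W x k) 2 m :=
    (EuclideanSpace.proj (𝕜 := ℝ) k).comp_memLp' hW
  (hcoord i).integrable_mul (hcoord j)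

theorem trace_secondMomentMatrix {W : α → EuclideanSpace ℝ ι} (hW : MemLp W 2 m) :
    (secondMomentMatrix W m).trace = ∫ x, ‖W x‖ ^ 2 ∂m := by
  simp only [Matrix.trace, diag_apply, secondMomentMatrix_apply]
  simp_rw [EuclideanSpace.real_norm_sq_eq, sq]
  exact (integral_finsetSum _ fun i _ => hW.integrable_coord_mul_coord i i).symm

theorem inner_toEuclideanLin_secondMomentMatrix [DecidableEq ι] {W : α → EuclideanSpace ℝ ι}
    (hW : MemLp W 2 m) (u v : EuclideanSpace ℝ ι) :
    ⟪toEuclideanLin (secondMomentMatrix W m) u, v⟫ = ∫ x, ⟪v, W x⟫ * ⟪u, W x⟫ ∂m := by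
  have hint (i j : ι) : Integrable (fun x => W x i * v i * (W x j * u j)) m := by
    simpa only [mul_mul_mul_comm] using (hW.integrable_coord_mul_coord i j).mul_const (v i * u j)
  have hpt (x : α) : ⟪v, W x⟫ * ⟪u, W x⟫ = ∑ i, ∑ j, W x i * v i * (W x j * u j) := by
    simp only [PiLp.inner_apply, RCLike.inner_apply, conj_trivial, Finset.sum_mul_sum]
  simp_rw [hpt]
  rw [integral_finsetSum _ fun i _ => integrable_finsetSum _ fun j _ => hint i j]
  simp only [PiLp.inner_apply, RCLike.inner_apply, conj_trivial, toLpLin_apply, mulVec, dotProduct,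
    Finset.mul_sum]
  refine Finset.sum_congr rfl fun i _ => ?_
  rw [integral_finsetSum _ fun j _ => hint i j]
  refine Finset.sum_congr rfl fun j _ => ?_
  rw [secondMomentMatrix_apply, ← integral_mul_const, ← integral_const_mul]
  exact integral_congr_ae (ae_of_all _ fun x => by ring)

theorem matrixOpNorm_secondMomentMatrix_sub_le {D : ℕ} {A B : α → EuclideanSpace ℝ (Fin D)}
    (hA : MemLp A 2 m) (hB : MemLp B 2 m) :
    matrixOpNorm (secondMomentMatrix A m - secondMomentMatrix B m) ≤
      (√(secondMomentMatrix A m).trace + √(secondMomentMatrix B m).trace) *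
        √(∫ x, ‖A x - B x‖ ^ 2 ∂m) := by
  have hAB : MemLp (fun x => A x - B x) 2 m := hA.sub hB
  have hA' : Integrable (fun x => ‖A x‖ * ‖A x - B x‖) m := hA.norm.integrable_mul hAB.norm
  have hB' : Integrable (fun x => ‖B x‖ * ‖A x - B x‖) m := hB.norm.integrable_mul hAB.norm
  refine ContinuousLinearMap.opNorm_le_of_re_inner_le (by positivity) fun u v hu hv => ?_
  have hAA : Integrable (fun x => ⟪v, A x⟫ * ⟪u, A x⟫) m :=
    (hA.const_inner (𝕜 := ℝ) v).integrable_mul (hA.const_inner u)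
  have hBB : Integrable (fun x => ⟪v, B x⟫ * ⟪u, B x⟫) m :=
    (hB.const_inner (𝕜 := ℝ) v).integrable_mul (hB.const_inner u)
  simp only [map_sub, _root_.sub_apply, LinearMap.coe_toContinuousLinearMap', inner_sub_left,
    inner_toEuclideanLin_secondMomentMatrix hA, inner_toEuclideanLin_secondMomentMatrix hB,
    RCLike.re_to_real, trace_secondMomentMatrix hA, trace_secondMomentMatrix hB]
  rw [← integral_sub hAA hBB]
  calc _ ≤ ∫ x, ‖A x‖ * ‖A x - B x‖ + ‖B x‖ * ‖A x - B x‖ ∂m := by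
        refine integral_mono (hAA.sub hBB) (hA'.add hB') fun x => ?_
        have h := abs_inner_mul_inner_sub_inner_mul_inner_le v u (A x) (B x)
        rw [hu, hv, one_mul, one_mul, add_mul] at h
        exact (le_abs_self _).trans h
    _ = (∫ x, ‖A x‖ * ‖A x - B x‖ ∂m) + ∫ x, ‖B x‖ * ‖A x - B x‖ ∂m := integral_add hA' hB'
    _ ≤ _ := by
        rw [add_mul]
        gcongr <;> exact integral_norm_mul_norm_le_sqrt_mul_sqrt ‹_› hAB

end SecondMoment

theorem covariance_difference_bound_general {D : ℕ}
    (μ ν : Measure (EuclideanSpace ℝ (Fin D)))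
    (hμ2 : MemLp id 2 μ) (hν2 : MemLp id 2 ν)
    (mμ mν : EuclideanSpace ℝ (Fin D))
    (Pμ Pν : Matrix (Fin D) (Fin D) ℝ)
    (hPμ : Pμ = fun i j => ∫ x, (x i - mμ i) * (x j - mμ j) ∂μ)
    (hPν : Pν = fun i j => ∫ x, (x i - mν i) * (x j - mν j) ∂ν)
    (γ : Measure (EuclideanSpace ℝ (Fin D) × EuclideanSpace ℝ (Fin D)))
    [IsProbabilityMeasure γ]
    (hγ1 : Measure.map Prod.fst γ = μ) (hγ2 : Measure.map Prod.snd γ = ν) :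
    matrixOpNorm (Pμ - Pν) ≤
      (Real.sqrt Pμ.trace + Real.sqrt Pν.trace) *
        Real.sqrt (∫ z, ‖z.1 - mμ - (z.2 - mν)‖ ^ 2 ∂γ) := by
  subst hγ1 hγ2
  have hPμ' : Pμ = secondMomentMatrix (fun z => z.1 - mμ) γ :=
    hPμ.trans (secondMomentMatrix_map (W := fun x => x - mμ) measurable_fst.aemeasurable
      (by fun_prop))
  have hPν' : Pν = secondMomentMatrix (fun z => z.2 - mν) γ :=
    hPν.trans (secondMomentMatrix_map (W := fun x => x - mν) measurable_snd.aemeasurable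
      (by fun_prop))
  have hX := (memLp_map_measure_iff aestronglyMeasurable_id measurable_fst.aemeasurable).1 hμ2
  have hY := (memLp_map_measure_iff aestronglyMeasurable_id measurable_snd.aemeasurable).1 hν2
  rw [hPμ', hPν']
  exact matrixOpNorm_secondMomentMatrix_sub_le (hX.sub (memLp_const mμ)) (hY.sub (memLp_const mν))

/-- For probability measures `μ, ν` on `ℝ^D` with means `m_μ, m_ν` and covariances
`P_μ, P_ν`, and any coupling `γ` of `μ` and `ν`,
`‖P_μ - P_ν‖_op ≤ (tr(P_μ)^{1/2} + tr(P_ν)^{1/2}) E[|X - m_μ - (Y - m_ν)|²]^{1/2}`. -/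
theorem covariance_difference_bound {D : ℕ}
    (μ ν : Measure (EuclideanSpace ℝ (Fin D)))
    [IsProbabilityMeasure μ] [IsProbabilityMeasure ν]
    (hμ2 : MemLp id 2 μ) (hν2 : MemLp id 2 ν)
    (mμ mν : EuclideanSpace ℝ (Fin D))
    (hmμ : mμ = ∫ x, x ∂μ) (hmν : mν = ∫ x, x ∂ν)
    (Pμ Pν : Matrix (Fin D) (Fin D) ℝ)
    (hPμ : Pμ = fun i j => ∫ x, (x i - mμ i) * (x j - mμ j) ∂μ)
    (hPν : Pν = fun i j => ∫ x, (x i - mν i) * (x j - mν j) ∂ν)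
    (γ : Measure (EuclideanSpace ℝ (Fin D) × EuclideanSpace ℝ (Fin D)))
    [IsProbabilityMeasure γ]
    (hγ1 : Measure.map Prod.fst γ = μ) (hγ2 : Measure.map Prod.snd γ = ν) :
    matrixOpNorm (Pμ - Pν) ≤
      (Real.sqrt Pμ.trace + Real.sqrt Pν.trace) *
        Real.sqrt (∫ z, ‖z.1 - mμ - (z.2 - mν)‖ ^ 2 ∂γ) :=
  covariance_difference_bound_general μ ν hμ2 hν2 mμ mν Pμ Pν hPμ hPν γ hγ1 hγ2
end

section
/- Consider the matrix ODE (d/ds) P_s = -P_s Φ R_s Φᵀ P_s - (1/2)(P_prior^{-1} P_s + P_s P_prior^{-1}) + (1/2) P_s, where P_s is symmetric, P_prior is symmetric positive definite, Φ is a fixed matrix, and s ↦ R_s is a family of diagonal positive semidefinite matrices with entries bounded by 1. Then the Frobenius norm satisfies (d/ds)‖P_s‖²_Fr ≤ ‖P_s‖²_Fr, and hence ‖P_s‖_Fr ≤ e^{s/2} ‖P₀‖_Fr for all s ≥ 0 (solutions do not blow up). -/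
/-!
Differentiating entrywise, `(d/ds)‖P‖²_Fr = 2 tr(P P')`. Substituting the ODE, the
Riccati term contributes `-tr(P · PΦRΦᵀP)` and the prior term `-tr(P² P_prior⁻¹)`, both traces
of products of two positive semidefinite matrices, hence nonpositive; what remains is
`tr(P²) = ‖P‖²_Fr`. Grönwall's inequality then gives `‖P_s‖²_Fr ≤ e^s ‖P₀‖²_Fr`.
-/

open Matrix Finset

section

variable {n m : Type*} [Fintype n] [Fintype m]

namespace Matrix

open scoped ComplexOrder MatrixOrder Matrix.Norms.L2Operator in
lemma PosSemidef.trace_mul_nonneg {𝕜 : Type*} [RCLike 𝕜] {A B : Matrix n n 𝕜}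
    (hA : A.PosSemidef) (hB : B.PosSemidef) : 0 ≤ (A * B).trace := by
  classical
  obtain ⟨T, rfl⟩ := CStarAlgebra.nonneg_iff_eq_star_mul_self.mp hA.nonneg
  rw [star_eq_conjTranspose, Matrix.mul_assoc, trace_mul_comm]
  exact (hB.mul_mul_conjTranspose_same T).trace_nonneg

lemma hasDerivAt_sum_sq_entries {P : ℝ → Matrix m n ℝ} {P' : Matrix m n ℝ} {s : ℝ}
    (h : ∀ i j, HasDerivAt (fun t => P t i j) (P' i j) s) :
    HasDerivAt (fun t => ∑ i, ∑ j, P t i j ^ 2) (2 * ((P s)ᵀ * P').trace) s := by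
  refine (HasDerivAt.fun_sum fun i _ => HasDerivAt.fun_sum fun j _ =>
    (h i j).fun_pow 2).congr_deriv ?_
  rw [trace_mul_comm, ← sum_hadamard_eq, hadamard_comm]
  simp only [hadamard_apply, Finset.mul_sum]
  norm_num [mul_assoc]

lemma sum_sq_entries_eq_trace (A : Matrix m n ℝ) : ∑ i, ∑ j, A i j ^ 2 = (Aᵀ * A).trace := by
  simp only [trace_mul_comm Aᵀ, ← sum_hadamard_eq, hadamard_apply, sq]

end Matrix

noncomputable def covarianceField (Φ : Matrix n m ℝ) (Pinv : Matrix n n ℝ) (R : Matrix m m ℝ)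
    (P : Matrix n n ℝ) : Matrix n n ℝ :=
  -(P * Φ * R * Φᵀ * P) - (1 / 2 : ℝ) • (Pinv * P + P * Pinv) + (1 / 2 : ℝ) • P

lemma trace_mul_covarianceField_le {Φ : Matrix n m ℝ} {Pinv P : Matrix n n ℝ} {R : Matrix m m ℝ}
    (hPinv : Pinv.PosSemidef) (hR : R.PosSemidef) (hP : P.PosSemidef) :
    (P * covarianceField Φ Pinv R P).trace ≤ (1 / 2) * (P * P).trace := by
  have hPt : Pᵀ = P := by simpa using hP.isHermitian.eq
  have hP2 : (P * P).PosSemidef := by simpa [hPt] using posSemidef_conjTranspose_mul_self P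
  have hgain : 0 ≤ (P * (P * Φ * R * Φᵀ * P)).trace := by
    refine hP.trace_mul_nonneg ?_
    simpa [Matrix.mul_assoc, hPt] using hR.mul_mul_conjTranspose_same (P * Φ)
  have hprior₁ : 0 ≤ (P * (Pinv * P)).trace := by
    rw [trace_mul_cycle', ← Matrix.mul_assoc]
    exact hP2.trace_mul_nonneg hPinv
  have hprior₂ : 0 ≤ (P * (P * Pinv)).trace := by
    rw [← Matrix.mul_assoc]
    exact hP2.trace_mul_nonneg hPinv
  simp only [covarianceField, Matrix.mul_sub, Matrix.mul_add, Matrix.mul_neg, Matrix.mul_smul,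
    trace_sub, trace_add, trace_neg, trace_smul, smul_eq_mul]
  linarith

lemma le_exp_mul_of_hasDerivAt_le_mul {f f' : ℝ → ℝ} {K s : ℝ}
    (hf : ∀ t, HasDerivAt f (f' t) t) (hle : ∀ t, f' t ≤ K * f t) (hs : 0 ≤ s) :
    f s ≤ Real.exp (K * s) * f 0 := by
  have := le_gronwallBound_of_liminf_deriv_right_le (a := 0) (b := s) (ε := 0)
    (fun t _ => (hf t).continuousAt.continuousWithinAt)
    (fun t _ r hr => (hf t).hasDerivWithinAt.liminf_right_slope_le hr) le_rfl
    (fun t _ => by simpa using hle t) s ⟨hs, le_rfl⟩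
  rwa [gronwallBound_ε0, sub_zero, mul_comm] at this

end

theorem covariance_ode_frobenius_bound_general {D N : ℕ}
    (Φ : Matrix (Fin D) (Fin N) ℝ) (Pprior : Matrix (Fin D) (Fin D) ℝ)
    (hPprior : Pprior.PosDef)
    (P : ℝ → Matrix (Fin D) (Fin D) ℝ) (R : ℝ → Matrix (Fin N) (Fin N) ℝ)
    (hPsd : ∀ s, (P s).PosSemidef)
    (hRsd : ∀ s, (R s).PosSemidef)
    (hode : ∀ s, ∀ i j, HasDerivAt (fun t => P t i j)
      ((-(P s * Φ * R s * Φᵀ * P s)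
        - (1 / 2 : ℝ) • (Pprior⁻¹ * P s + P s * Pprior⁻¹)
        + (1 / 2 : ℝ) • P s) i j) s) :
    (∀ s, 0 ≤ s →
        deriv (fun t => ∑ i, ∑ j, (P t i j) ^ 2) s ≤ ∑ i, ∑ j, (P s i j) ^ 2) ∧
      ∀ s, 0 ≤ s →
        Real.sqrt (∑ i, ∑ j, (P s i j) ^ 2) ≤
          Real.exp (s / 2) * Real.sqrt (∑ i, ∑ j, (P 0 i j) ^ 2) := by
  set F := fun s => covarianceField Φ Pprior⁻¹ (R s) (P s)
  have hsymm : ∀ s, (P s)ᵀ = P s := fun s => by simpa using (hPsd s).isHermitian.eq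
  have hderiv : ∀ s, HasDerivAt (fun t => ∑ i, ∑ j, P t i j ^ 2) (2 * (P s * F s).trace) s := by
    simpa only [hsymm] using fun s => hasDerivAt_sum_sq_entries (P' := F s) (hode s)
  have hle : ∀ s, 2 * (P s * F s).trace ≤ ∑ i, ∑ j, P s i j ^ 2 := by
    intro s
    have := trace_mul_covarianceField_le hPprior.inv.posSemidef (hRsd s) (hPsd s) (Φ := Φ)
    rw [sum_sq_entries_eq_trace, hsymm]
    linarith
  refine ⟨fun s _ => (hderiv s).deriv ▸ hle s, fun s hs => ?_⟩
  have hgronwall := le_exp_mul_of_hasDerivAt_le_mul hderiv (K := 1) (by simpa using hle) hs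
  rw [one_mul] at hgronwall
  calc √(∑ i, ∑ j, P s i j ^ 2) ≤ √(Real.exp s * ∑ i, ∑ j, P 0 i j ^ 2) :=
        Real.sqrt_le_sqrt hgronwall
    _ = Real.exp (s / 2) * √(∑ i, ∑ j, P 0 i j ^ 2) := by
        rw [Real.sqrt_mul (Real.exp_nonneg s), Real.exp_half]

/-- For the covariance ODE
`P' = -P Φ R Φᵀ P - (1/2)(P_prior⁻¹ P + P P_prior⁻¹) + (1/2) P`
with `P_s` symmetric positive semidefinite, `P_prior` positive definite and `R_s`
diagonal positive semidefinite with entries at most `1`, the squared Frobenius norm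
satisfies `(d/ds)‖P_s‖²_Fr ≤ ‖P_s‖²_Fr`, hence `‖P_s‖_Fr ≤ e^{s/2} ‖P₀‖_Fr` for `s ≥ 0`. -/
theorem covariance_ode_frobenius_bound {D N : ℕ}
    (Φ : Matrix (Fin D) (Fin N) ℝ) (Pprior : Matrix (Fin D) (Fin D) ℝ)
    (hPprior : Pprior.PosDef)
    (P : ℝ → Matrix (Fin D) (Fin D) ℝ) (R : ℝ → Matrix (Fin N) (Fin N) ℝ)
    (hPsd : ∀ s, (P s).PosSemidef)
    (hRsd : ∀ s, (R s).PosSemidef)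
    (hRdiag : ∀ s, ∀ i j, i ≠ j → R s i j = 0)
    (hRle : ∀ s i, R s i i ≤ 1)
    (hode : ∀ s, ∀ i j, HasDerivAt (fun t => P t i j)
      ((-(P s * Φ * R s * Φᵀ * P s)
        - (1 / 2 : ℝ) • (Pprior⁻¹ * P s + P s * Pprior⁻¹)
        + (1 / 2 : ℝ) • P s) i j) s) :
    (∀ s, 0 ≤ s →
        deriv (fun t => ∑ i, ∑ j, (P t i j) ^ 2) s ≤ ∑ i, ∑ j, (P s i j) ^ 2) ∧
      ∀ s, 0 ≤ s →
        Real.sqrt (∑ i, ∑ j, (P s i j) ^ 2) ≤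
          Real.exp (s / 2) * Real.sqrt (∑ i, ∑ j, (P 0 i j) ^ 2) :=
  covariance_ode_frobenius_bound_general Φ Pprior hPprior P R hPsd hRsd hode
end
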